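/- Let u solve the backward heat equation with drift, −∂_t u − Δu + V(t,x)·Du = f(t,x) on (t₀,T) × ℝ^d with u(T,·) = g, where V is bounded, and suppose that f(t,·) and g are L-Lipschitz in x uniformly in t, and V is K-Lipschitz in x uniformly in t. Then u(t,·) is Lipschitz in x for each t, with Lipschitz constant bounded by a constant depending only on L, K, ‖V‖_∞ and T − t₀ (via a maximum-principle/Feynman–Kac argument). -/

import Mathlib

/-!
Doubling of variables. For `δ, ε > 0` let
`Φ(t, x, y) = u(t, x) - u(t, y) - A(t) √(δ² + |x - y|²) - ε (|x|² + |y|²)` with the barrier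
`A(t) = (L + 1) e^{(K + 1)(T - t)}`, so that `-A' = (K + 1) A ≥ K A + L + 1`. The `ε`-term makes
`Φ` attain its maximum over `[t₁, T] × ℝ^d × ℝ^d`. At `t = T` the Lipschitz bound on `g` gives
`Φ ≤ 0`. At an earlier time the first- and second-order conditions in `x`, `y` and `t`, inserted
into the equation at `x` and at `y`, give `√(δ² + |x - y|²) ≤ 4 d ε + 2 M ε (|x| + |y|)`, and the
`ε`-term keeps `ε |x|, ε |y| ≤ √(2 ε sup |u|)`; for small `ε` this contradicts
`√(δ² + |x - y|²) ≥ δ` unless `Φ ≤ 0`. Letting `ε → 0` and then `δ → 0` gives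
`u(t, x) - u(t, y) ≤ A(t) |x - y|`, and the initial time follows by continuity.
-/

noncomputable section
open MeasureTheory RealInnerProductSpace

/-- The Laplacian of `φ : ℝ^d → ℝ` at `x`, as the trace of the second derivative. -/
def lapl {d : ℕ} (φ : EuclideanSpace ℝ (Fin d) → ℝ) (x : EuclideanSpace ℝ (Fin d)) : ℝ :=
  ∑ i, iteratedFDeriv ℝ 2 φ x ![EuclideanSpace.single i 1, EuclideanSpace.single i 1]

open Set Filter Topology Bornology InnerProductSpace

theorem IsLocalMax.hasDerivAt_deriv_nonpos {f f' : ℝ → ℝ} {x c : ℝ} (h : IsLocalMax f x)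
    (hf : ∀ s, HasDerivAt f (f' s) s) (hf' : HasDerivAt f' c x) : c ≤ 0 := by
  have hderiv : deriv f = f' := funext fun s => (hf s).deriv
  by_contra! hc
  have hmin : IsLocalMin f x :=
    isLocalMin_of_deriv_deriv_pos (by rwa [hderiv, hf'.deriv]) (by rw [hderiv, ← (hf x).deriv,
      h.deriv_eq_zero]) (hf x).continuousAt
  have hconst : f =ᶠ[𝓝 x] fun _ => f x := (h.and hmin).mono fun s hs => le_antisymm hs.1 hs.2
  have hzero : f' =ᶠ[𝓝 x] fun _ => 0 :=
    hconst.eventuallyEq_nhds.mono fun s hs => by rw [← hderiv, hs.deriv_eq, deriv_const]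
  exact hc.ne' (by rw [← hf'.deriv, hzero.deriv_eq, deriv_const])

theorem IsMaxOn.hasDerivAt_nonpos_of_Icc {f : ℝ → ℝ} {f' a b : ℝ} (hab : a < b)
    (h : IsMaxOn f (Icc a b) a) (hf : HasDerivAt f f' a) : f' ≤ 0 := by
  have hcone : (1 : ℝ) ∈ posTangentConeAt (Icc a b) a := by
    rw [one_mem_posTangentConeAt_iff_frequently]
    exact Eventually.frequently (mem_of_superset (Ioo_mem_nhdsGT hab) Ioo_subset_Icc_self)
  simpa using h.localize.hasFDerivWithinAt_nonpos hf.hasFDerivAt.hasFDerivWithinAt hcone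

theorem exists_isMaxOn_of_isBounded {X : Type*} [PseudoMetricSpace X] [ProperSpace X]
    {f : X → ℝ} {s : Set X} {x₀ : X} (hs : IsClosed s) (hf : ContinuousOn f s) (h₀ : x₀ ∈ s)
    (hb : IsBounded {x ∈ s | f x₀ ≤ f x}) : ∃ x ∈ s, f x₀ ≤ f x ∧ IsMaxOn f s x := by
  have hK : IsCompact {x ∈ s | f x₀ ≤ f x} :=
    Metric.isCompact_of_isClosed_isBounded (hf.preimage_isClosed_of_isClosed hs isClosed_Ici) hb
  obtain ⟨x, hx, hmax⟩ := hK.exists_isMaxOn ⟨x₀, h₀, le_rfl⟩ (hf.mono fun _ hy => hy.1)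
  refine ⟨x, hx.1, hx.2, fun y hy => ?_⟩
  by_cases hy' : f x₀ ≤ f y
  · exact hmax ⟨hy, hy'⟩
  · exact (not_le.1 hy').le.trans hx.2

theorem mul_le_sqrt_mul_of_mul_sq_le {ε a B : ℝ} (hε : 0 ≤ ε) (ha : 0 ≤ a) (h : ε * a ^ 2 ≤ B) :
    ε * a ≤ √(ε * B) := by
  rw [Real.le_sqrt (by positivity) (mul_nonneg hε ((by positivity : 0 ≤ ε * a ^ 2).trans h))]
  nlinarith [mul_le_mul_of_nonneg_left h hε]

section Line

variable {E : Type*} [NormedAddCommGroup E] [NormedSpace ℝ E]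

theorem hasDerivAt_comp_add_smul {F : Type*} [NormedAddCommGroup F] [NormedSpace ℝ F]
    {u : E → F} {x v : E} {s : ℝ} (hu : DifferentiableAt ℝ u (x + s • v)) :
    HasDerivAt (fun s : ℝ => u (x + s • v)) (fderiv ℝ u (x + s • v) v) s :=
  hu.hasFDerivAt.comp_hasDerivAt s (by simpa using ((hasDerivAt_id s).smul_const v).const_add x)

theorem hasDerivAt_fderiv_comp_add_smul {u : E → ℝ} (hu : ContDiff ℝ 2 u) (x v : E) :
    HasDerivAt (fun s : ℝ => fderiv ℝ u (x + s • v) v) (iteratedFDeriv ℝ 2 u x ![v, v]) 0 := by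
  have hDu : Differentiable ℝ (fderiv ℝ u) :=
    (hu.fderiv_right le_rfl).differentiable one_ne_zero
  have := (ContinuousLinearMap.apply ℝ ℝ v).hasFDerivAt.comp_hasDerivAt 0
    (hasDerivAt_comp_add_smul (hDu (x + (0 : ℝ) • v)))
  simpa [iteratedFDeriv_two_apply, Function.comp_def] using this

end Line

section Doubling

variable {E : Type*} [NormedAddCommGroup E]

def doublingFun (u : E → ℝ) (A δ ε : ℝ) (x y : E) : ℝ :=
  u x - u y - A * √(δ ^ 2 + ‖x - y‖ ^ 2) - ε * (‖x‖ ^ 2 + ‖y‖ ^ 2)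

def timeDoublingFun (u : ℝ → E → ℝ) (A : ℝ → ℝ) (δ ε : ℝ) (p : ℝ × E × E) : ℝ :=
  doublingFun (u p.1) (A p.1) δ ε p.2.1 p.2.2

variable {u : E → ℝ} {A δ ε : ℝ} {x y : E}

theorem doublingFun_le_of_abs_le {Cb : ℝ} (hu : ∀ z, |u z| ≤ Cb) (hA : 0 ≤ A) :
    doublingFun u A δ ε x y ≤ 2 * Cb - ε * (‖x‖ ^ 2 + ‖y‖ ^ 2) := by
  have hx := abs_le.1 (hu x)
  have hy := abs_le.1 (hu y)
  have := mul_nonneg hA (Real.sqrt_nonneg (δ ^ 2 + ‖x - y‖ ^ 2))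
  unfold doublingFun
  linarith

theorem doublingFun_nonpos_of_sub_le (h : u x - u y ≤ A * ‖x - y‖) (hA : 0 ≤ A) (hε : 0 ≤ ε) :
    doublingFun u A δ ε x y ≤ 0 := by
  have hsqrt : ‖x - y‖ ≤ √(δ ^ 2 + ‖x - y‖ ^ 2) :=
    Real.le_sqrt_of_sq_le (le_add_of_nonneg_left (sq_nonneg δ))
  have := mul_le_mul_of_nonneg_left hsqrt hA
  have := mul_nonneg hε (by positivity : 0 ≤ ‖x‖ ^ 2 + ‖y‖ ^ 2)
  unfold doublingFun
  linarith

theorem continuous_timeDoublingFun {u : ℝ → E → ℝ} {A : ℝ → ℝ}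
    (hu : Continuous fun q : ℝ × E => u q.1 q.2) (hA : Continuous A) :
    Continuous (timeDoublingFun u A δ ε) := by
  have hx := hu.comp (continuous_fst.prodMk continuous_snd.fst :
    Continuous fun p : ℝ × E × E => (p.1, p.2.1))
  have hy := hu.comp (continuous_fst.prodMk continuous_snd.snd :
    Continuous fun p : ℝ × E × E => (p.1, p.2.2))
  unfold timeDoublingFun doublingFun
  fun_prop

end Doubling

section InnerProductSpace

variable {E : Type*} [NormedAddCommGroup E] [InnerProductSpace ℝ E] {u : E → ℝ} {A δ ε : ℝ}
  {x y : E}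

theorem hasGradientAt_of_isLocalMax_sub [CompleteSpace E] {f : E → ℝ}
    (hf : DifferentiableAt ℝ f x) (hδ : 0 < δ)
    (hmax : IsLocalMax (fun z => f z - A * √(δ ^ 2 + ‖z - y‖ ^ 2) - ε * ‖z‖ ^ 2) x) :
    HasGradientAt f ((A / √(δ ^ 2 + ‖x - y‖ ^ 2)) • (x - y) + (2 * ε) • x) x := by
  have hq : δ ^ 2 + ‖x - y‖ ^ 2 ≠ 0 := by positivity
  have hsqrt := (((hasFDerivAt_id x).sub_const y).norm_sq.const_add (δ ^ 2)).sqrt hq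
  have hΦ : HasFDerivAt (fun z => f z - A * √(δ ^ 2 + ‖z - y‖ ^ 2) - ε * ‖z‖ ^ 2)
      (fderiv ℝ f x - toDual ℝ E ((A / √(δ ^ 2 + ‖x - y‖ ^ 2)) • (x - y) + (2 * ε) • x)) x := by
    refine ((hf.hasFDerivAt.sub (hsqrt.const_mul A)).sub
      ((hasStrictFDerivAt_norm_sq x).hasFDerivAt.const_mul ε)).congr_fderiv ?_
    ext v
    simp only [id_eq, one_div, mul_inv_rev, map_sub, ContinuousLinearMap.comp_id, sub_apply,
      smul_apply, coe_innerSL_apply, nsmul_eq_mul, Nat.cast_ofNat, smul_eq_mul, map_add, map_smul,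
      add_apply, toDual_apply_apply]
    ring
  have hzero := hmax.hasFDerivAt_eq_zero hΦ
  rw [hasGradientAt_iff_hasFDerivAt, ← sub_eq_zero.1 hzero]
  exact hf.hasFDerivAt

theorem gradient_eq_of_doublingFun_max [CompleteSpace E] (hu : Differentiable ℝ u) (hδ : 0 < δ)
    (hmax : ∀ x' y', doublingFun u A δ ε x' y' ≤ doublingFun u A δ ε x y) :
    gradient u x = (A / √(δ ^ 2 + ‖x - y‖ ^ 2)) • (x - y) + (2 * ε) • x ∧
      gradient u y = (A / √(δ ^ 2 + ‖x - y‖ ^ 2)) • (x - y) - (2 * ε) • y := by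
  constructor
  · refine (hasGradientAt_of_isLocalMax_sub (hu x) hδ (Eventually.of_forall fun z => ?_)).gradient
    have := hmax z y
    simp only [doublingFun] at this
    linarith
  · have hneg := hasGradientAt_of_isLocalMax_sub (f := -u) (y := x) (A := A) (ε := ε)
      (hu y).neg hδ (Eventually.of_forall fun z => ?_)
    · rw [hasGradientAt_iff_hasFDerivAt] at hneg
      have hu' := hneg.neg
      rw [← map_neg] at hu'
      simp only [neg_neg] at hu'
      rw [(hasGradientAt_iff_hasFDerivAt.2 hu').gradient, norm_sub_rev]
      module
    · have := hmax x z
      simp only [doublingFun, norm_sub_rev x] at this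
      simp only [Pi.neg_apply]
      linarith

theorem iteratedFDeriv_two_sub_le_of_doublingFun_max (hu : ContDiff ℝ 2 u)
    (hmax : ∀ x' y', doublingFun u A δ ε x' y' ≤ doublingFun u A δ ε x y) (v : E) :
    iteratedFDeriv ℝ 2 u x ![v, v] - iteratedFDeriv ℝ 2 u y ![v, v] ≤ 4 * ε * ‖v‖ ^ 2 := by
  have hdiff : Differentiable ℝ u := hu.differentiable (by norm_num)
  have hline : ∀ z : E, ∀ s : ℝ, HasDerivAt (fun s : ℝ => z + s • v) v s := fun z s => by
    simpa using ((hasDerivAt_id s).smul_const v).const_add z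
  -- moving both points by the same vector leaves the `A`-term unchanged
  have hmax0 : IsLocalMax (fun s : ℝ => doublingFun u A δ ε (x + s • v) (y + s • v)) 0 :=
    Eventually.of_forall fun s => by simpa using hmax (x + s • v) (y + s • v)
  have hφ : ∀ s : ℝ, HasDerivAt (fun s : ℝ => doublingFun u A δ ε (x + s • v) (y + s • v))
      (fderiv ℝ u (x + s • v) v - fderiv ℝ u (y + s • v) v
        - ε * (2 * ⟪x + s • v, v⟫ + 2 * ⟪y + s • v, v⟫)) s := by
    intro s
    simp only [doublingFun, add_sub_add_right_eq_sub]
    exact (((hasDerivAt_comp_add_smul (hdiff _)).sub (hasDerivAt_comp_add_smul (hdiff _))).sub_const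
      _).sub (((hline x s).norm_sq.add (hline y s).norm_sq).const_mul ε)
  have hinner : ∀ z : E, HasDerivAt (fun s : ℝ => 2 * ⟪z + s • v, v⟫) (2 * ‖v‖ ^ 2) 0 := by
    intro z
    simpa using ((hline z 0).inner ℝ (hasDerivAt_const 0 v)).const_mul 2
  have hφ' := ((hasDerivAt_fderiv_comp_add_smul hu x v).sub
    (hasDerivAt_fderiv_comp_add_smul hu y v)).sub (((hinner x).add (hinner y)).const_mul ε)
  have := hmax0.hasDerivAt_deriv_nonpos hφ hφ'
  linarith

theorem inner_drift_sub_ge {V : E → E} {K M ρ : ℝ} (hV : ∀ z, ‖V z‖ ≤ M)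
    (hVK : ‖V x - V y‖ ≤ K * ‖x - y‖) (hK : 0 ≤ K) (hA : 0 ≤ A) (hε : 0 ≤ ε)
    (hρ : 0 < ρ) (hxy : ‖x - y‖ ≤ ρ) :
    -(K * A * ρ) - 2 * M * (ε * ‖x‖ + ε * ‖y‖) ≤
      ⟪V x, (A / ρ) • (x - y) + (2 * ε) • x⟫ - ⟪V y, (A / ρ) • (x - y) - (2 * ε) • y⟫ := by
  have hsplit : ⟪V x, (A / ρ) • (x - y) + (2 * ε) • x⟫ - ⟪V y, (A / ρ) • (x - y) - (2 * ε) • y⟫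
      = A / ρ * ⟪V x - V y, x - y⟫ + 2 * ε * (⟪V x, x⟫ + ⟪V y, y⟫) := by
    simp only [inner_add_right, inner_sub_right, inner_sub_left, real_inner_smul_right]
    ring
  have hLip : -(K * ρ ^ 2) ≤ ⟪V x - V y, x - y⟫ := by
    refine neg_le_of_abs_le ((abs_real_inner_le_norm _ _).trans ?_)
    calc ‖V x - V y‖ * ‖x - y‖ ≤ K * ‖x - y‖ * ‖x - y‖ :=
          mul_le_mul_of_nonneg_right hVK (norm_nonneg _)
      _ ≤ K * ρ * ρ := by gcongr
      _ = K * ρ ^ 2 := by ring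
  have hbdd : ∀ z, -(M * ‖z‖) ≤ ⟪V z, z⟫ := fun z =>
    neg_le_of_abs_le ((abs_real_inner_le_norm _ _).trans
      (mul_le_mul_of_nonneg_right (hV z) (norm_nonneg z)))
  have h1 := mul_le_mul_of_nonneg_left hLip (div_nonneg hA hρ.le)
  have h2 := mul_le_mul_of_nonneg_left (add_le_add (hbdd x) (hbdd y)) (by positivity : 0 ≤ 2 * ε)
  have h3 : A / ρ * -(K * ρ ^ 2) = -(K * A * ρ) := by field_simp
  rw [hsplit]
  linarith

end InnerProductSpace

theorem lapl_sub_le_of_doublingFun_max {d : ℕ} {u : EuclideanSpace ℝ (Fin d) → ℝ} {A δ ε : ℝ}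
    {x y : EuclideanSpace ℝ (Fin d)} (hu : ContDiff ℝ 2 u)
    (hmax : ∀ x' y', doublingFun u A δ ε x' y' ≤ doublingFun u A δ ε x y) :
    lapl u x - lapl u y ≤ 4 * d * ε := by
  unfold lapl
  rw [← Finset.sum_sub_distrib]
  calc _ ≤ ∑ _i : Fin d, 4 * ε := Finset.sum_le_sum fun i _ => by
          simpa using iteratedFDeriv_two_sub_le_of_doublingFun_max hu hmax
            (EuclideanSpace.single i 1)
    _ = 4 * d * ε := by
          simp only [Finset.sum_const, Finset.card_univ, Fintype.card_fin, nsmul_eq_mul]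
          ring

def lipBarrier (L K T t : ℝ) : ℝ := (L + 1) * Real.exp ((K + 1) * (T - t))

section lipBarrier

variable {L K T s t : ℝ}

theorem hasDerivAt_lipBarrier (L K T t : ℝ) :
    HasDerivAt (lipBarrier L K T) (-(K + 1) * lipBarrier L K T t) t := by
  refine ((((hasDerivAt_id t).const_sub T).const_mul (K + 1)).exp.const_mul (L + 1)).congr_deriv ?_
  simp only [lipBarrier, id]
  ring

theorem lipBarrier_pos (hL : 0 ≤ L) : 0 < lipBarrier L K T t := by
  unfold lipBarrier
  positivity

theorem add_one_le_lipBarrier (hL : 0 ≤ L) (hK : 0 ≤ K) (ht : t ≤ T) :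
    L + 1 ≤ lipBarrier L K T t :=
  le_mul_of_one_le_right (by linarith) (Real.one_le_exp (by nlinarith))

theorem lipBarrier_anti (hL : 0 ≤ L) (hK : 0 ≤ K) (hst : s ≤ t) :
    lipBarrier L K T t ≤ lipBarrier L K T s := by
  unfold lipBarrier
  gcongr

end lipBarrier

section DriftHeat

variable {d : ℕ}

structure IsDriftHeatSolution (t₀ T : ℝ)
    (V : ℝ → EuclideanSpace ℝ (Fin d) → EuclideanSpace ℝ (Fin d))
    (f u ut : ℝ → EuclideanSpace ℝ (Fin d) → ℝ) : Prop where
  contDiff : ∀ t ∈ Ioo t₀ T, ContDiff ℝ 2 (u t)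
  hasDerivAt : ∀ t ∈ Ioo t₀ T, ∀ x, HasDerivAt (fun s => u s x) (ut t x) t
  pde : ∀ t ∈ Ioo t₀ T, ∀ x, -(ut t x) - lapl (u t) x + ⟪V t x, gradient (u t) x⟫ = f t x

variable {t₀ T L K M δ ε tm : ℝ} {V : ℝ → EuclideanSpace ℝ (Fin d) → EuclideanSpace ℝ (Fin d)}
  {f u ut : ℝ → EuclideanSpace ℝ (Fin d) → ℝ} {x y : EuclideanSpace ℝ (Fin d)}

theorem sqrt_le_of_isMaxOn_timeDoublingFun (hsol : IsDriftHeatSolution t₀ T V f u ut)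
    (hV : ∀ z, ‖V tm z‖ ≤ M) (hVK : ‖V tm x - V tm y‖ ≤ K * ‖x - y‖)
    (hf : |f tm x - f tm y| ≤ L * ‖x - y‖) (hL : 0 ≤ L) (hK : 0 ≤ K) (htm : tm ∈ Ioo t₀ T)
    (hδ : 0 < δ) (hε : 0 ≤ ε)
    (hmax : IsMaxOn (timeDoublingFun u (lipBarrier L K T) δ ε) (Icc tm T ×ˢ univ) (tm, x, y)) :
    √(δ ^ 2 + ‖x - y‖ ^ 2) ≤ 4 * d * ε + 2 * M * (ε * ‖x‖ + ε * ‖y‖) := by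
  set A := lipBarrier L K T tm
  set ρ := √(δ ^ 2 + ‖x - y‖ ^ 2) with hρdef
  have hρ : 0 < ρ := Real.sqrt_pos.2 (by positivity)
  have hxy : ‖x - y‖ ≤ ρ := Real.le_sqrt_of_sq_le (le_add_of_nonneg_left (sq_nonneg δ))
  have hu := hsol.contDiff tm htm
  have hspace : ∀ x' y', doublingFun (u tm) A δ ε x' y' ≤ doublingFun (u tm) A δ ε x y :=
    fun x' y' => hmax (mk_mem_prod ⟨le_rfl, htm.2.le⟩ (mem_univ (x', y')))
  obtain ⟨hgx, hgy⟩ := gradient_eq_of_doublingFun_max (hu.differentiable (by norm_num)) hδ hspace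
  rw [← hρdef] at hgx hgy
  have hlapl := lapl_sub_le_of_doublingFun_max hu hspace
  have hdrift := inner_drift_sub_ge (A := A) hV hVK hK (lipBarrier_pos hL).le hε hρ hxy
  have htime : ut tm x - ut tm y - -(K + 1) * A * ρ ≤ 0 := by
    refine IsMaxOn.hasDerivAt_nonpos_of_Icc
      (f := fun s => timeDoublingFun u (lipBarrier L K T) δ ε (s, x, y)) htm.2
      (fun s hs => hmax (mk_mem_prod hs (mem_univ (x, y)))) ?_
    exact (((hsol.hasDerivAt tm htm x).sub (hsol.hasDerivAt tm htm y)).sub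
      ((hasDerivAt_lipBarrier L K T tm).mul_const ρ)).sub_const (ε * (‖x‖ ^ 2 + ‖y‖ ^ 2))
  have hpx := hsol.pde tm htm x
  have hpy := hsol.pde tm htm y
  rw [hgx] at hpx
  rw [hgy] at hpy
  have hfxy : f tm x - f tm y ≤ L * ρ :=
    (le_of_abs_le hf).trans (mul_le_mul_of_nonneg_left hxy hL)
  have hAρ := mul_le_mul_of_nonneg_right (add_one_le_lipBarrier hL hK htm.2.le) hρ.le
  linarith

theorem doublingFun_nonpos {Cb t₁ : ℝ} (hsol : IsDriftHeatSolution t₀ T V f u ut)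
    (hucont : Continuous fun q : ℝ × EuclideanSpace ℝ (Fin d) => u q.1 q.2)
    (hub : ∀ t x, |u t x| ≤ Cb) (hV : ∀ t x, ‖V t x‖ ≤ M)
    (hVK : ∀ t ∈ Icc t₀ T, ∀ x y, ‖V t x - V t y‖ ≤ K * ‖x - y‖)
    (hfL : ∀ t ∈ Icc t₀ T, ∀ x y, |f t x - f t y| ≤ L * ‖x - y‖)
    (hT : ∀ x y, u T x - u T y ≤ L * ‖x - y‖) (hL : 0 ≤ L) (hK : 0 ≤ K)
    (ht₁ : t₁ ∈ Ioc t₀ T) (hδ : 0 < δ) (hε : 0 < ε)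
    (hsmall : 4 * d * ε + 4 * M * √(ε * (2 * Cb)) < δ) :
    doublingFun (u t₁) (lipBarrier L K T t₁) δ ε x y ≤ 0 := by
  by_contra! hpos
  set Φ := timeDoublingFun u (lipBarrier L K T) δ ε
  have hcoercive : ∀ p, 0 < Φ p →
      ε * ‖p.2.1‖ ≤ √(ε * (2 * Cb)) ∧ ε * ‖p.2.2‖ ≤ √(ε * (2 * Cb)) := by
    intro p hp
    have := hp.trans_le (doublingFun_le_of_abs_le (hub p.1) (lipBarrier_pos hL).le)
    constructor <;> refine mul_le_sqrt_mul_of_mul_sq_le hε.le (norm_nonneg _) ?_ <;>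
      linarith [mul_nonneg hε.le (sq_nonneg ‖p.2.1‖), mul_nonneg hε.le (sq_nonneg ‖p.2.2‖)]
  have hbdd : IsBounded {p ∈ Icc t₁ T ×ˢ univ | Φ (t₁, x, y) ≤ Φ p} := by
    have hball := Metric.isBounded_closedBall (x := (0 : EuclideanSpace ℝ (Fin d)))
      (r := √(ε * (2 * Cb)) / ε)
    refine ((Metric.isBounded_Icc t₁ T).prod (hball.prod hball)).subset ?_
    rintro p ⟨hp, hΦp⟩
    obtain ⟨h1, h2⟩ := hcoercive p (hpos.trans_le hΦp)
    exact ⟨hp.1, mem_closedBall_zero_iff.2 ((le_div_iff₀' hε).2 h1),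
      mem_closedBall_zero_iff.2 ((le_div_iff₀' hε).2 h2)⟩
  obtain ⟨⟨tm, xm, ym⟩, hmS, hge, hmax⟩ := exists_isMaxOn_of_isBounded
    (isClosed_Icc.prod isClosed_univ)
    (continuous_timeDoublingFun hucont (by unfold lipBarrier; fun_prop)).continuousOn
    (show (t₁, x, y) ∈ Icc t₁ T ×ˢ univ from ⟨⟨le_rfl, ht₁.2⟩, trivial⟩) hbdd
  have hΦm : 0 < Φ (tm, xm, ym) := hpos.trans_le hge
  rcases hmS.1.2.eq_or_lt with rfl | hlt
  · refine hΦm.not_ge (doublingFun_nonpos_of_sub_le ((hT xm ym).trans ?_)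
      (lipBarrier_pos hL).le hε.le)
    exact mul_le_mul_of_nonneg_right (add_one_le_lipBarrier hL hK le_rfl |>.trans' (by linarith))
      (norm_nonneg _)
  · have htm : tm ∈ Ioo t₀ T := ⟨ht₁.1.trans_le hmS.1.1, hlt⟩
    have hM : 0 ≤ M := (norm_nonneg _).trans (hV tm 0)
    obtain ⟨hx, hy⟩ := hcoercive _ hΦm
    have htm' := Ioo_subset_Icc_self htm
    have hρ := sqrt_le_of_isMaxOn_timeDoublingFun hsol (hV tm) (hVK tm htm' xm ym)
      (hfL tm htm' xm ym) hL hK htm hδ hε.le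
      (hmax.on_subset (prod_mono (Icc_subset_Icc_left hmS.1.1) subset_rfl))
    have hδρ : δ ≤ √(δ ^ 2 + ‖xm - ym‖ ^ 2) :=
      Real.le_sqrt_of_sq_le (le_add_of_nonneg_right (sq_nonneg _))
    linarith [mul_le_mul_of_nonneg_left (add_le_add hx hy) hM]

theorem sub_le_lipBarrier_mul_norm {Cb t₁ : ℝ} (hsol : IsDriftHeatSolution t₀ T V f u ut)
    (hucont : Continuous fun q : ℝ × EuclideanSpace ℝ (Fin d) => u q.1 q.2)
    (hub : ∀ t x, |u t x| ≤ Cb) (hV : ∀ t x, ‖V t x‖ ≤ M)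
    (hVK : ∀ t ∈ Icc t₀ T, ∀ x y, ‖V t x - V t y‖ ≤ K * ‖x - y‖)
    (hfL : ∀ t ∈ Icc t₀ T, ∀ x y, |f t x - f t y| ≤ L * ‖x - y‖)
    (hT : ∀ x y, u T x - u T y ≤ L * ‖x - y‖) (hL : 0 ≤ L) (hK : 0 ≤ K)
    (ht₁ : t₁ ∈ Ioc t₀ T) (x y : EuclideanSpace ℝ (Fin d)) :
    u t₁ x - u t₁ y ≤ lipBarrier L K T t₁ * ‖x - y‖ := by
  set A := lipBarrier L K T t₁
  have hδ : ∀ δ > 0, u t₁ x - u t₁ y ≤ A * √(δ ^ 2 + ‖x - y‖ ^ 2) := by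
    intro δ hδ
    have hsmall : ∀ᶠ ε in 𝓝[>] 0, 4 * d * ε + 4 * M * √(ε * (2 * Cb)) < δ := by
      have hcont : Continuous fun ε : ℝ => 4 * d * ε + 4 * M * √(ε * (2 * Cb)) := by fun_prop
      refine (hcont.tendsto' 0 0 (by simp)).mono_left nhdsWithin_le_nhds |>.eventually
        (gt_mem_nhds hδ)
    refine ge_of_tendsto (x := 𝓝[>] 0)
      (f := fun ε => A * √(δ ^ 2 + ‖x - y‖ ^ 2) + ε * (‖x‖ ^ 2 + ‖y‖ ^ 2))
      ((Continuous.tendsto' (by fun_prop) 0 _ (by simp)).mono_left nhdsWithin_le_nhds) ?_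
    filter_upwards [hsmall, self_mem_nhdsWithin] with ε hε hε0
    have := doublingFun_nonpos (x := x) (y := y) hsol hucont hub hV hVK hfL hT hL hK ht₁ hδ hε0 hε
    unfold doublingFun at this
    linarith
  refine ge_of_tendsto (x := 𝓝[>] 0) (f := fun δ => A * √(δ ^ 2 + ‖x - y‖ ^ 2))
    ((Continuous.tendsto' (by fun_prop) 0 _ (by simp [Real.sqrt_sq (norm_nonneg _)])).mono_left
      nhdsWithin_le_nhds) ?_
  filter_upwards [self_mem_nhdsWithin] with δ hδ0 using hδ δ hδ0

end DriftHeat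

theorem stmt7_general (d : ℕ) (t₀ T L K M : ℝ) (ht : t₀ < T) (hL : 0 ≤ L) (hK : 0 ≤ K) :
    ∃ C : ℝ, 0 < C ∧
      ∀ (V : ℝ → EuclideanSpace ℝ (Fin d) → EuclideanSpace ℝ (Fin d))
        (f : ℝ → EuclideanSpace ℝ (Fin d) → ℝ)
        (g : EuclideanSpace ℝ (Fin d) → ℝ)
        (u ut : ℝ → EuclideanSpace ℝ (Fin d) → ℝ) (Cb : ℝ),
        (∀ t x, ‖V t x‖ ≤ M) →
        (∀ t ∈ Set.Icc t₀ T, ∀ x y, ‖V t x - V t y‖ ≤ K * ‖x - y‖) →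
        (∀ t ∈ Set.Icc t₀ T, ∀ x y, |f t x - f t y| ≤ L * ‖x - y‖) →
        (∀ x y, |g x - g y| ≤ L * ‖x - y‖) →
        (∀ t x, |u t x| ≤ Cb) →
        (Continuous fun q : ℝ × EuclideanSpace ℝ (Fin d) => u q.1 q.2) →
        (∀ t ∈ Set.Ioo t₀ T, ContDiff ℝ 2 (u t)) →
        (∀ t ∈ Set.Ioo t₀ T, ∀ x, HasDerivAt (fun s => u s x) (ut t x) t) →
        (∀ t ∈ Set.Ioo t₀ T, ∀ x,
          -(ut t x) - lapl (u t) x + ⟪V t x, gradient (u t) x⟫ = f t x) →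
        (∀ x, u T x = g x) →
        ∀ t ∈ Set.Icc t₀ T, ∀ x y, |u t x - u t y| ≤ C * ‖x - y‖ := by
  refine ⟨lipBarrier L K T t₀, lipBarrier_pos hL, ?_⟩
  intro V f g u ut Cb hV hVK hfL hgL hub hucont hu2 hut hpde huT t htI x y
  have hT : ∀ x y, u T x - u T y ≤ L * ‖x - y‖ := fun x y => by
    rw [huT, huT]
    exact le_of_abs_le (hgL x y)
  have hIoc : ∀ s ∈ Ioc t₀ T, ∀ x y, u s x - u s y ≤ lipBarrier L K T t₀ * ‖x - y‖ :=
    fun s hs x y => (sub_le_lipBarrier_mul_norm ⟨hu2, hut, hpde⟩ hucont hub hV hVK hfL hT hL hK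
      hs x y).trans (mul_le_mul_of_nonneg_right (lipBarrier_anti hL hK hs.1.le) (norm_nonneg _))
  have hclosed : IsClosed {s | |u s x - u s y| ≤ lipBarrier L K T t₀ * ‖x - y‖} := by
    refine isClosed_le ?_ continuous_const
    exact ((hucont.comp (continuous_id.prodMk continuous_const)).sub
      (hucont.comp (continuous_id.prodMk continuous_const))).abs
  rw [← closure_Ioc ht.ne] at htI
  refine closure_minimal (fun s hs => abs_sub_le_iff.2 ⟨hIoc s hs x y, ?_⟩) hclosed htI
  rw [norm_sub_rev]
  exact hIoc s hs y x

/-- Let `u` be a bounded classical solution of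
`-∂_t u - Δu + V·Du = f` on `(t₀,T) × ℝ^d`, `u(T,·) = g`, with `V` bounded and `K`-Lipschitz in
`x`, and `f(t,·)`, `g` `L`-Lipschitz in `x` uniformly in `t`. Then `u(t,·)` is Lipschitz for each
`t ∈ [t₀,T]`, with constant depending only on `L`, `K`, `‖V‖_∞` and `T - t₀`. -/
theorem stmt7 (d : ℕ) (t₀ T L K M : ℝ) (ht : t₀ < T) (hL : 0 ≤ L) (hK : 0 ≤ K) (hM : 0 ≤ M) :
    ∃ C : ℝ, 0 < C ∧
      ∀ (V : ℝ → EuclideanSpace ℝ (Fin d) → EuclideanSpace ℝ (Fin d))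
        (f : ℝ → EuclideanSpace ℝ (Fin d) → ℝ)
        (g : EuclideanSpace ℝ (Fin d) → ℝ)
        (u ut : ℝ → EuclideanSpace ℝ (Fin d) → ℝ) (Cb : ℝ),
        (∀ t x, ‖V t x‖ ≤ M) →
        (∀ t ∈ Set.Icc t₀ T, ∀ x y, ‖V t x - V t y‖ ≤ K * ‖x - y‖) →
        (∀ t ∈ Set.Icc t₀ T, ∀ x y, |f t x - f t y| ≤ L * ‖x - y‖) →
        (∀ x y, |g x - g y| ≤ L * ‖x - y‖) →
        (∀ t x, |u t x| ≤ Cb) →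
        (Continuous fun q : ℝ × EuclideanSpace ℝ (Fin d) => u q.1 q.2) →
        (∀ t ∈ Set.Ioo t₀ T, ContDiff ℝ 2 (u t)) →
        (∀ t ∈ Set.Ioo t₀ T, ∀ x, HasDerivAt (fun s => u s x) (ut t x) t) →
        (∀ t ∈ Set.Ioo t₀ T, ∀ x,
          -(ut t x) - lapl (u t) x + ⟪V t x, gradient (u t) x⟫ = f t x) →
        (∀ x, u T x = g x) →
        ∀ t ∈ Set.Icc t₀ T, ∀ x y, |u t x - u t y| ≤ C * ‖x - y‖ :=
  stmt7_general d t₀ T L K M ht hL hK
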